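/- arXiv:2210.02371 — 2 statements merged into one kernel-verified Lean document; each statement's English description precedes it below -/
import Mathlib

section
/- For all i ≥ 1, the proportion of 1's in v_i satisfies |v_i|_1/|v_i| ≥ ∏_{j=0}^{i-1} (1 + m_j/n_j)^{-1}. -/
/-- The `k`-th power of a finite word `w` (concatenation of `k` copies). -/
def wpow (w : List Bool) (k : ℕ) : List Bool := (List.replicate k w).flatten

/-- The pair of words `(u_i, v_i)`:  `u_0 = 0`, `v_0 = 1`,
`u_{i+1} = u_i^{m_i} v_i^{l_i}`, `v_{i+1} = u_i^{m_i} v_i^{n_i}`. -/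
def uvSeq (l m n : ℕ → ℕ) : ℕ → List Bool × List Bool
  | 0 => ([false], [true])
  | i + 1 =>
      (wpow (uvSeq l m n i).1 (m i) ++ wpow (uvSeq l m n i).2 (l i),
       wpow (uvSeq l m n i).1 (m i) ++ wpow (uvSeq l m n i).2 (n i))

/-- The substitution `σ_h` : `0 ↦ 0^{m_h} 1^{l_h}`, `1 ↦ 0^{m_h} 1^{n_h}`. -/
def subw (l m n : ℕ → ℕ) (h : ℕ) (w : List Bool) : List Bool :=
  w.flatMap fun c => List.replicate (m h) false ++ List.replicate (if c then n h else l h) true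

/-- `wordIter i h = σ_h σ_{h+1} ⋯ σ_{h+i-1}(0)`. -/
def wordIter (l m n : ℕ → ℕ) : ℕ → ℕ → List Bool
  | 0, _ => [false]
  | i + 1, h => subw l m n h (wordIter l m n i (h + 1))

/-- The infinite word `u^{(h)} = lim_i σ_h ⋯ σ_{h+i-1}(0)`. -/
def limWord (l m n : ℕ → ℕ) (h : ℕ) (k : ℕ) : Bool :=
  (wordIter l m n (k + 1) h).getD k false

/-- `w` is a factor of the infinite word `U`. -/
def IsFactor (U : ℕ → Bool) (w : List Bool) : Prop :=
  ∃ k, w = (List.range w.length).map fun j => U (k + j)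

/-- `σ_0 σ_1 ⋯ σ_{h+i-1}` starting at `h`, applied to `w`. -/
def subComp (l m n : ℕ → ℕ) : ℕ → ℕ → List Bool → List Bool
  | 0, _, w => w
  | i + 1, h, w => subw l m n h (subComp l m n i (h + 1) w)

/-- `\hat{σ}_h(w) = 1^{l_h} σ_h(w) 0^{m_h} 1^{l_h}`. -/
def hatw (l m n : ℕ → ℕ) (h : ℕ) (w : List Bool) : List Bool :=
  List.replicate (l h) true ++ subw l m n h w ++
    List.replicate (m h) false ++ List.replicate (l h) true

/-- `hatComp i h w = \hat{σ}_h ⋯ \hat{σ}_{h+i-1}(w)`. -/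
def hatComp (l m n : ℕ → ℕ) : ℕ → ℕ → List Bool → List Bool
  | 0, _, w => w
  | i + 1, h, w => hatw l m n h (hatComp l m n i (h + 1) w)

/-- The complexity function of the infinite word `U`. -/
noncomputable def complexityFn (U : ℕ → Bool) (nn : ℕ) : ℕ :=
  Set.ncard {w : List Bool | w.length = nn ∧ IsFactor U w}


lemma wpow_length (w : List Bool) (k : ℕ) : (wpow w k).length = k * w.length := by
  induction k with
  | zero => simp [wpow]
  | succ k ih =>
    simp only [wpow, List.replicate_succ, List.flatten_cons, List.length_append] at *
    rw [ih]; ring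

lemma wpow_count (w : List Bool) (k : ℕ) : (wpow w k).count true = k * w.count true := by
  induction k with
  | zero => simp [wpow]
  | succ k ih =>
    simp only [wpow, List.replicate_succ, List.flatten_cons, List.count_append] at *
    rw [ih]; ring

lemma uv_len_le (l m n : ℕ → ℕ) (hln : ∀ j, l j ≤ n j) (i : ℕ) :
    (uvSeq l m n i).1.length ≤ (uvSeq l m n i).2.length := by
  induction i with
  | zero => simp [uvSeq]
  | succ i ih =>
    simp only [uvSeq, List.length_append, wpow_length]
    have := hln i
    nlinarith

lemma v_len_pos (l m n : ℕ → ℕ) (hn : ∀ j, 0 < n j) (i : ℕ) :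
    0 < (uvSeq l m n i).2.length := by
  induction i with
  | zero => simp [uvSeq]
  | succ i ih =>
    simp only [uvSeq, List.length_append, wpow_length]
    have := hn i
    nlinarith

theorem stmt5 (l m n : ℕ → ℕ) (hlmono : StrictMono l) (hmmono : StrictMono m)
    (hnmono : StrictMono n) (hlpos : ∀ i, 0 < l i)
    (hlm : ∀ i, l i < m i) (hmn : ∀ i, m i < n i) (i : ℕ) (hi : 1 ≤ i) :
    (((uvSeq l m n i).2.count true : ℝ) / ((uvSeq l m n i).2.length : ℝ))
      ≥ ∏ j ∈ Finset.range i, (1 + (m j : ℝ) / (n j : ℝ))⁻¹ := by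
  clear hi
  have hln : ∀ j, l j ≤ n j := fun j => le_of_lt ((hlm j).trans (hmn j))
  have hn : ∀ j, 0 < n j := fun j => (hlpos j).trans ((hlm j).trans (hmn j))
  induction i with
  | zero => simp [uvSeq]
  | succ i ih =>
    rw [Finset.prod_range_succ]
    set au := (uvSeq l m n i).1.count true with hau
    set av := (uvSeq l m n i).2.count true with hav
    set bu := (uvSeq l m n i).1.length with hbu
    set bv := (uvSeq l m n i).2.length with hbv
    have hbvpos : 0 < bv := v_len_pos l m n hn i
    have hbub : bu ≤ bv := uv_len_le l m n hln i
    have hni : (0:ℝ) < n i := by exact_mod_cast hn i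
    have hmi : (0:ℝ) ≤ m i := by positivity
    have hbvR : (0:ℝ) < bv := by exact_mod_cast hbvpos
    have hcount : ((uvSeq l m n (i+1)).2.count true : ℝ) = m i * au + n i * av := by
      simp only [uvSeq, List.count_append, wpow_count, ← hau, ← hav]
      push_cast; ring
    have hlen : ((uvSeq l m n (i+1)).2.length : ℝ) = m i * bu + n i * bv := by
      simp only [uvSeq, List.length_append, wpow_length, ← hbu, ← hbv]
      push_cast; ring
    rw [hcount, hlen]
    have hdenpos : (0:ℝ) < m i * bu + n i * bv := by positivity
    have step1 : ((n i : ℝ) * av) / ((n i + m i) * bv) ≤ (m i * au + n i * av) / (m i * bu + n i * bv) := by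
      apply div_le_div₀ (by positivity) (le_add_of_nonneg_left (by positivity)) hdenpos
      have : (m i : ℝ) * bu ≤ m i * bv := by
        apply mul_le_mul_of_nonneg_left _ hmi
        exact_mod_cast hbub
      nlinarith
    refine le_trans ?_ step1
    have hinv : (1 + (m i : ℝ) / n i)⁻¹ = n i / (n i + m i) := by
      rw [one_add_div hni.ne', inv_div]
    rw [hinv]
    have hP0 : (0:ℝ) ≤ ∏ j ∈ Finset.range i, (1 + (m j : ℝ) / (n j : ℝ))⁻¹ := by
      apply Finset.prod_nonneg; intro j _; positivity
    calc (∏ j ∈ Finset.range i, (1 + (m j : ℝ) / (n j : ℝ))⁻¹) * (n i / (n i + m i))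
        ≤ (av / bv) * (n i / (n i + m i)) := by
          apply mul_le_mul_of_nonneg_right ih (by positivity)
      _ = (n i * av) / ((n i + m i) * bv) := by
          rw [div_mul_div_comm]; ring_nf
end

section
/- With l_i = 2^{2·2^i+4}, m_i = 2^{8·2^i}, n_i = 2^{10·2^i}, for all i ≥ 0 the Parikh vectors satisfy |b_{i+1}|_0 > l_{i+1}(|d_i|_0 + 1) and |b_{i+1}|_1 > l_{i+1}(|d_i|_1 + 1), where b_i = \hat{σ}_0⋯\hat{σ}_{i-1}(1^{l_i}) and d_i = \hat{σ}_0⋯\hat{σ}_{i-1}(1^{n_i - 1}). -/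
lemma count_fk (w : List Bool) : w.count false + w.count true = w.length := by
  induction w with
  | nil => simp
  | cons c t ih => cases c <;> simp [List.count_cons, *] <;> omega

lemma subw_count_false (l m n : ℕ → ℕ) (h : ℕ) (w : List Bool) :
    (subw l m n h w).count false = m h * w.length := by
  induction w with
  | nil => simp [subw]
  | cons c t ih =>
      cases c <;> simp [subw, List.count_append, List.count_replicate, Nat.mul_succ] at ih ⊢ <;> omega

lemma subw_count_true (l m n : ℕ → ℕ) (h : ℕ) (w : List Bool) :
    (subw l m n h w).count true = l h * w.count false + n h * w.count true := by
  induction w with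
  | nil => simp [subw]
  | cons c t ih =>
      cases c <;>
        simp [subw, List.count_append, List.count_replicate, List.count_cons] at ih ⊢ <;>
      ring_nf <;> omega

lemma hatw_count_false (l m n : ℕ → ℕ) (h : ℕ) (w : List Bool) :
    (hatw l m n h w).count false = m h * (w.count false + w.count true) + m h := by
  simp [hatw, List.count_append, List.count_replicate, subw_count_false, count_fk]

lemma hatw_count_true (l m n : ℕ → ℕ) (h : ℕ) (w : List Bool) :
    (hatw l m n h w).count true = 2 * l h + l h * w.count false + n h * w.count true := by
  simp [hatw, List.count_append, List.count_replicate, subw_count_true]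
  ring

lemma key (l m n : ℕ → ℕ) (L : ℕ) (hL : 1 ≤ L)
    (hm2 : ∀ h, 2 ≤ m h) (hln : ∀ h, l h + 1 ≤ n h) :
    ∀ j h (A B : List Bool),
      A.count false > L * (B.count false + 1) →
      A.count true > L * (B.count true + 1) →
      (hatComp l m n j h A).count false > L * ((hatComp l m n j h B).count false + 1) ∧
      (hatComp l m n j h A).count true > L * ((hatComp l m n j h B).count true + 1) := by
  intro j
  induction j with
  | zero => intro h A B h0 h1; exact ⟨h0, h1⟩
  | succ j ih =>
      intro h A B h0 h1
      obtain ⟨ih0, ih1⟩ := ih (h + 1) A B h0 h1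
      set A' := hatComp l m n j (h + 1) A
      set B' := hatComp l m n j (h + 1) B
      have hm' := hm2 h
      have hln' := hln h
      constructor
      · show (hatw l m n h A').count false > L * ((hatw l m n h B').count false + 1)
        rw [hatw_count_false, hatw_count_false]
        nlinarith [ih0, ih1]
      · show (hatw l m n h A').count true > L * ((hatw l m n h B').count true + 1)
        rw [hatw_count_true, hatw_count_true]
        nlinarith [ih0, ih1]

lemma hatComp_succ' (l m n : ℕ → ℕ) :
    ∀ j h (w : List Bool), hatComp l m n (j + 1) h w = hatComp l m n j h (hatw l m n (h + j) w) := by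
  intro j
  induction j with
  | zero => intro h w; rfl
  | succ j ih =>
      intro h w
      show hatw l m n h (hatComp l m n (j + 1) (h + 1) w) = _
      rw [ih (h + 1) w]
      have : h + 1 + j = h + (j + 1) := by omega
      rw [this]
      rfl

theorem stmt18 (l m n : ℕ → ℕ) (hl : ∀ i, l i = 2 ^ (2 * 2 ^ i + 4))
    (hm : ∀ i, m i = 2 ^ (8 * 2 ^ i)) (hn : ∀ i, n i = 2 ^ (10 * 2 ^ i)) (i : ℕ) :
    (hatComp l m n (i + 1) 0 (List.replicate (l (i + 1)) true)).count false >
        l (i + 1) * ((hatComp l m n i 0 (List.replicate (n i - 1) true)).count false + 1) ∧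
      (hatComp l m n (i + 1) 0 (List.replicate (l (i + 1)) true)).count true >
        l (i + 1) * ((hatComp l m n i 0 (List.replicate (n i - 1) true)).count true + 1) := by
  have hm2 : ∀ h, 2 ≤ m h := by
    intro h; rw [hm]
    calc (2:ℕ) = 2 ^ 1 := by norm_num
    _ ≤ 2 ^ (8 * 2 ^ h) := by
        apply Nat.pow_le_pow_right (by norm_num)
        have := Nat.one_le_two_pow (n := h)
        omega
  have hln : ∀ h, l h + 1 ≤ n h := by
    intro h; rw [hl, hn]
    have h1 : 2 * 2 ^ h + 4 + 1 ≤ 10 * 2 ^ h := by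
      have := Nat.one_le_two_pow (n := h); omega
    calc 2 ^ (2 * 2 ^ h + 4) + 1 ≤ 2 ^ (2 * 2 ^ h + 4) + 2 ^ (2 * 2 ^ h + 4) := by
          exact Nat.add_le_add_left Nat.one_le_two_pow _
    _ = 2 ^ (2 * 2 ^ h + 4 + 1) := by rw [pow_succ]; ring
    _ ≤ 2 ^ (10 * 2 ^ h) := Nat.pow_le_pow_right (by norm_num) h1
  have hL : 1 ≤ l (i + 1) := by rw [hl]; exact Nat.one_le_two_pow
  set L := l (i + 1)
  rw [hatComp_succ' l m n i 0]
  apply key l m n L hL hm2 hln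
  · rw [hatw_count_false]
    simp [List.count_replicate]
    have := hm2 i
    nlinarith [hL]
  · rw [hatw_count_true]
    simp [List.count_replicate]
    have hn1 : 1 ≤ n i := by rw [hn]; exact Nat.one_le_two_pow
    have hl1 : 1 ≤ l i := by rw [hl]; exact Nat.one_le_two_pow
    have : n i - 1 + 1 = n i := by omega
    rw [this]
    nlinarith [hL]
end
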